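/- For every ε > 0 there exists a positive integer K such that for every integer n with n > 4Km there exist matrices E_n, R_n ∈ ℝ^{mn×mn} with (T_nᵀT_n + α²I_{mn})^{−1/2} − (G_nᵀG_n + α²I_{mn})^{−1/2} = E_n + R_n, ‖E_n‖₂ ≤ ε, and rank(R_n) ≤ 4Km. -/

import Mathlib

open Matrix Filter MeasureTheory
open scoped Matrix.Norms.L2Operator

noncomputable section

/- `Tmat m n L` : the block lower-triangular banded block-Toeplitz matrix
`T_n ∈ ℝ^{mn×mn}`, with `n×n` blocks each of size `m×m`, whose `(i,j)`-th block equals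
`L` if `i = j`, `-2·I_m` if `i = j+1`, `L` if `i = j+2`, and `0` otherwise. -/
def Tmat (m n : ℕ) (L : Matrix (Fin m) (Fin m) ℝ) :
    Matrix (Fin n × Fin m) (Fin n × Fin m) ℝ := fun p q =>
  if (p.1 : ℕ) = (q.1 : ℕ) then L p.2 q.2
  else if (p.1 : ℕ) = (q.1 : ℕ) + 1 then (if p.2 = q.2 then (-2 : ℝ) else 0)
  else if (p.1 : ℕ) = (q.1 : ℕ) + 2 then L p.2 q.2
  else 0

/- `G_n` : the block Tau approximation of `T_n`: symmetric block tridiagonal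
block-Toeplitz with `(i,j)`-th `m×m` block equal to `2·I_m` if `i = j`, `−L` if
`|i − j| = 1`, and `0` otherwise. -/
def Gmat (m n : ℕ) (L : Matrix (Fin m) (Fin m) ℝ) :
    Matrix (Fin n × Fin m) (Fin n × Fin m) ℝ := fun p q =>
  if (p.1 : ℕ) = (q.1 : ℕ) then (if p.2 = q.2 then (2 : ℝ) else 0)
  else if (p.1 : ℕ) = (q.1 : ℕ) + 1 ∨ (q.1 : ℕ) = (p.1 : ℕ) + 1 then -(L p.2 q.2)
  else 0

/- the unique symmetric positive semidefinite square root of a positive semidefinite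
real matrix (junk value `0` if the matrix is not positive semidefinite). -/
open scoped Classical in
def matSqrt {k : Type*} [Fintype k] [DecidableEq k] (M : Matrix k k ℝ) : Matrix k k ℝ :=
  if h : M.PosSemidef then
    (h.1.eigenvectorUnitary : Matrix k k ℝ) * diagonal ((↑) ∘ Real.sqrt ∘ h.1.eigenvalues) *
      (star h.1.eigenvectorUnitary : Matrix k k ℝ)
  else 0


namespace Stmt11

open scoped Kronecker

variable {n : ℕ}

/-- down-shift matrix -/
def J (n : ℕ) : Matrix (Fin n) (Fin n) ℝ := fun i j => if (i : ℕ) = (j : ℕ) + 1 then 1 else 0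

/-- projection onto first coordinate -/
def P0 (n : ℕ) : Matrix (Fin n) (Fin n) ℝ := diagonal (fun i => if (i : ℕ) = 0 then 1 else 0)

/-- projection onto last coordinate -/
def Pl (n : ℕ) : Matrix (Fin n) (Fin n) ℝ :=
  diagonal (fun i => if (i : ℕ) = n - 1 then 1 else 0)

lemma J_mul_J : J n * J n = of fun (i j : Fin n) => if (i : ℕ) = (j : ℕ) + 2 then (1:ℝ) else 0 := by
  ext i j
  rw [of_apply]
  simp only [mul_apply, J]
  by_cases h : (i : ℕ) = (j : ℕ) + 2
  · have hj : (j : ℕ) + 1 < n := by omega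
    rw [Finset.sum_eq_single (⟨(j : ℕ) + 1, hj⟩ : Fin n)]
    · simp [h]
    · intro k _ hk
      have : ¬((k : ℕ) = (j : ℕ) + 1) := fun hc => hk (Fin.ext hc)
      simp [this]
    · simp
  · rw [if_neg h, Finset.sum_eq_zero]
    intro k _
    by_cases h1 : (i : ℕ) = (k : ℕ) + 1 <;> by_cases h2 : (k : ℕ) = (j : ℕ) + 1 <;>
      simp [h1, h2] <;> omega

lemma Jt_mul_J : (J n)ᵀ * J n = 1 - Pl n := by
  ext i j
  simp only [mul_apply, transpose_apply, J, Pl, Matrix.sub_apply, one_apply, diagonal_apply]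
  by_cases hij : i = j
  · subst hij
    by_cases hl : (i : ℕ) + 1 < n
    · rw [Finset.sum_eq_single (⟨(i : ℕ) + 1, hl⟩ : Fin n)]
      · have : (i : ℕ) ≠ n - 1 := by omega
        simp [this]
      · intro k _ hk
        have : ¬((k : ℕ) = (i : ℕ) + 1) := fun hc => hk (Fin.ext hc)
        simp [this]
      · simp
    · have hi : (i : ℕ) = n - 1 := by omega
      rw [Finset.sum_eq_zero]
      · simp [hi]
      · intro k _
        have : ¬((k : ℕ) = (i : ℕ) + 1) := by omega
        simp [this]
  · have hij' : ¬((i : ℕ) = (j : ℕ)) := fun hc => hij (Fin.ext hc)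
    rw [Finset.sum_eq_zero]
    · simp [hij]
    · intro k _
      by_cases h1 : (k : ℕ) = (i : ℕ) + 1 <;> by_cases h2 : (k : ℕ) = (j : ℕ) + 1 <;>
        simp [h1, h2] <;> omega

lemma J_mul_Jt : J n * (J n)ᵀ = 1 - P0 n := by
  ext i j
  simp only [mul_apply, transpose_apply, J, P0, Matrix.sub_apply, one_apply, diagonal_apply]
  by_cases hij : i = j
  · subst hij
    by_cases hl : 1 ≤ (i : ℕ)
    · have hi' : (i : ℕ) - 1 < n := by omega
      rw [Finset.sum_eq_single (⟨(i : ℕ) - 1, hi'⟩ : Fin n)]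
      · have h1 : (i : ℕ) = (i : ℕ) - 1 + 1 := by omega
        have h0 : ¬ ((i:ℕ) = 0) := by omega
        simp [h0, ← h1]
      · intro k hk' hk
        have : ¬((i : ℕ) = (k : ℕ) + 1) := by
          intro hc
          have hk2 : (k : ℕ) = (i : ℕ) - 1 := by omega
          exact hk (Fin.ext (by simp [hk2]))
        simp [this]
      · simp
    · have hi : (i : ℕ) = 0 := by omega
      rw [Finset.sum_eq_zero]
      · simp [hi]
      · intro k _
        have : ¬((i : ℕ) = (k : ℕ) + 1) := by omega
        simp [this]
  · have hij' : ¬((i : ℕ) = (j : ℕ)) := fun hc => hij (Fin.ext hc)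
    rw [Finset.sum_eq_zero]
    · simp [hij]
    · intro k _
      by_cases h1 : (i : ℕ) = (k : ℕ) + 1 <;> by_cases h2 : (j : ℕ) = (k : ℕ) + 1 <;>
        simp [h1, h2] <;> omega


variable {m : ℕ} {L : Matrix (Fin m) (Fin m) ℝ}

lemma Tmat_eq : Tmat m n L = (1 + J n * J n) ⊗ₖ L
    + (-2 : ℝ) • (J n ⊗ₖ (1 : Matrix (Fin m) (Fin m) ℝ)) := by
  ext ⟨i, a⟩ ⟨j, b⟩
  simp only [Tmat, J_mul_J, Matrix.add_apply, kronecker_apply, Matrix.smul_apply, one_apply, of_apply, J,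
    smul_eq_mul]
  have hfe : (i = j) ↔ ((i:ℕ) = (j:ℕ)) := ⟨fun h => by rw [h], fun h => Fin.ext h⟩
  by_cases h0 : (i : ℕ) = (j : ℕ) <;> by_cases h1 : (i : ℕ) = (j : ℕ) + 1 <;>
    by_cases h2 : (i : ℕ) = (j : ℕ) + 2 <;>
    first
      | (exfalso; omega)
      | (simp only [h0, h1, h2, hfe, if_true, if_false] <;> split_ifs <;>
          first | ring1 | (exfalso; omega))

lemma Gmat_eq (hsym : Lᵀ = L) : Gmat m n L =
    (2 : ℝ) • ((1 : Matrix (Fin n) (Fin n) ℝ) ⊗ₖ (1 : Matrix (Fin m) (Fin m) ℝ))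
    - (J n + (J n)ᵀ) ⊗ₖ L := by
  ext ⟨i, a⟩ ⟨j, b⟩
  simp only [Gmat, Matrix.sub_apply, Matrix.smul_apply, kronecker_apply, one_apply, Matrix.add_apply, transpose_apply,
    J, smul_eq_mul]
  have hfe : (i = j) ↔ ((i:ℕ) = (j:ℕ)) := ⟨fun h => by rw [h], fun h => Fin.ext h⟩
  by_cases h0 : (i : ℕ) = (j : ℕ) <;> by_cases h1 : (i : ℕ) = (j : ℕ) + 1 <;>
    by_cases h2 : (j : ℕ) = (i : ℕ) + 1 <;>
    first
      | (exfalso; omega)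
      | (simp only [h0, h1, h2, hfe, or_true, true_or, or_self, if_true, if_false,
          or_false, false_or] <;> split_ifs <;> first | ring1 | (exfalso; omega))

lemma sub_kron (A B : Matrix (Fin n) (Fin n) ℝ) (C : Matrix (Fin m) (Fin m) ℝ) :
    (A - B) ⊗ₖ C = A ⊗ₖ C - B ⊗ₖ C := by
  ext ⟨i, a⟩ ⟨j, b⟩
  simp only [Matrix.sub_apply, kroneckerMap_apply, sub_mul]

lemma kron_sub (A : Matrix (Fin n) (Fin n) ℝ) (B C : Matrix (Fin m) (Fin m) ℝ) :
    A ⊗ₖ (B - C) = A ⊗ₖ B - A ⊗ₖ C := by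
  ext ⟨i, a⟩ ⟨j, b⟩
  simp only [Matrix.sub_apply, kroneckerMap_apply, mul_sub]

/-- The key structural identity. -/
lemma key_formula (hsym : Lᵀ = L) :
    (Tmat m n L)ᵀ * Tmat m n L - (Gmat m n L)ᵀ * Gmat m n L =
      P0 n ⊗ₖ (L * L) - ((J n)ᵀ * (Pl n * J n)) ⊗ₖ (L * L)
        + ((J n)ᵀ * Pl n) ⊗ₖ ((2:ℝ) • L) + (Pl n * J n) ⊗ₖ ((2:ℝ) • L)
        + Pl n ⊗ₖ ((-4:ℝ) • (1 : Matrix (Fin m) (Fin m) ℝ)) := by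
  have hTt : (Tmat m n L)ᵀ = (1 + (J n)ᵀ * (J n)ᵀ) ⊗ₖ L
      + (-2 : ℝ) • ((J n)ᵀ ⊗ₖ (1 : Matrix (Fin m) (Fin m) ℝ)) := by
    rw [Tmat_eq, transpose_add, transpose_smul, ← kroneckerMap_transpose,
      ← kroneckerMap_transpose, transpose_add, transpose_one, transpose_mul, transpose_one, hsym]
  have hGt : (Gmat m n L)ᵀ = Gmat m n L := by
    rw [Gmat_eq hsym, transpose_sub, transpose_smul, ← kroneckerMap_transpose,
      ← kroneckerMap_transpose, transpose_add, transpose_transpose, transpose_one, transpose_one,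
      hsym, add_comm (J n) (J n)ᵀ]
  rw [hGt, hTt, Tmat_eq, Gmat_eq hsym]
  simp only [add_mul, mul_add, sub_mul, mul_sub, smul_mul_assoc, mul_smul_comm, smul_smul,
    ← mul_kronecker_mul, one_mul, mul_one, smul_kronecker]
  have g4 : (J n)ᵀ * J n = 1 - Pl n := Jt_mul_J
  have g5 : J n * (J n)ᵀ = 1 - P0 n := J_mul_Jt
  have g1 : (J n)ᵀ * (J n * J n) = J n - Pl n * J n := by
    calc (J n)ᵀ * (J n * J n) = ((J n)ᵀ * J n) * J n := by noncomm_ring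
      _ = (1 - Pl n) * J n := by rw [g4]
      _ = J n - Pl n * J n := by noncomm_ring
  have g2 : (J n)ᵀ * (J n)ᵀ * (J n * J n) = 1 - Pl n - (J n)ᵀ * (Pl n * J n) := by
    calc (J n)ᵀ * (J n)ᵀ * (J n * J n) = (J n)ᵀ * ((J n)ᵀ * (J n * J n)) := by noncomm_ring
      _ = (J n)ᵀ * (J n - Pl n * J n) := by rw [g1]
      _ = (J n)ᵀ * J n - (J n)ᵀ * (Pl n * J n) := by noncomm_ring
      _ = 1 - Pl n - (J n)ᵀ * (Pl n * J n) := by rw [g4]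
  have g3 : (J n)ᵀ * (J n)ᵀ * J n = (J n)ᵀ - (J n)ᵀ * Pl n := by
    calc (J n)ᵀ * (J n)ᵀ * J n = (J n)ᵀ * ((J n)ᵀ * J n) := by noncomm_ring
      _ = (J n)ᵀ * (1 - Pl n) := by rw [g4]
      _ = (J n)ᵀ - (J n)ᵀ * Pl n := by noncomm_ring
  rw [g2, g1, g3, g4, g5]
  simp only [sub_kron, kron_sub, add_kronecker, kronecker_add, smul_kronecker, kronecker_smul,
    one_kronecker_one]
  module


lemma Tmat_transpose_eq (hsym : Lᵀ = L) :
    (Tmat m n L)ᵀ = (1 + (J n)ᵀ * (J n)ᵀ) ⊗ₖ L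
      + (-2 : ℝ) • ((J n)ᵀ ⊗ₖ (1 : Matrix (Fin m) (Fin m) ℝ)) := by
  rw [Tmat_eq, transpose_add, transpose_smul, ← kroneckerMap_transpose,
    ← kroneckerMap_transpose, transpose_add, transpose_one, transpose_mul, transpose_one, hsym]

lemma Gmat_transpose_eq (hsym : Lᵀ = L) : (Gmat m n L)ᵀ = Gmat m n L := by
  rw [Gmat_eq hsym, transpose_sub, transpose_smul, ← kroneckerMap_transpose,
    ← kroneckerMap_transpose, transpose_add, transpose_transpose, transpose_one, transpose_one,
    hsym, add_comm (J n) (J n)ᵀ]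

section Phi

variable {ι : Type*} [Fintype ι] [DecidableEq ι] {M : Matrix ι ι ℝ}

/-- apply a function to a Hermitian matrix spectrally -/
def phi (hM : M.IsHermitian) (g : ℝ → ℝ) : Matrix ι ι ℝ :=
  (hM.eigenvectorUnitary : Matrix ι ι ℝ) * diagonal (g ∘ hM.eigenvalues) *
    (star (hM.eigenvectorUnitary : Matrix ι ι ℝ))

variable (hM : M.IsHermitian)

lemma phi_mul (g h : ℝ → ℝ) : phi hM g * phi hM h = phi hM (fun x => g x * h x) := by
  have key : (star (hM.eigenvectorUnitary : Matrix ι ι ℝ)) *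
      (hM.eigenvectorUnitary : Matrix ι ι ℝ) = 1 :=
    Unitary.star_mul_self_of_mem (SetLike.coe_mem _)
  unfold phi
  calc (hM.eigenvectorUnitary : Matrix ι ι ℝ) * diagonal (g ∘ hM.eigenvalues) *
      (star (hM.eigenvectorUnitary : Matrix ι ι ℝ)) *
      ((hM.eigenvectorUnitary : Matrix ι ι ℝ) * diagonal (h ∘ hM.eigenvalues) *
      (star (hM.eigenvectorUnitary : Matrix ι ι ℝ)))
      = (hM.eigenvectorUnitary : Matrix ι ι ℝ) * (diagonal (g ∘ hM.eigenvalues) *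
        ((star (hM.eigenvectorUnitary : Matrix ι ι ℝ)) *
          (hM.eigenvectorUnitary : Matrix ι ι ℝ)) * diagonal (h ∘ hM.eigenvalues)) *
        (star (hM.eigenvectorUnitary : Matrix ι ι ℝ)) := by
        simp only [mul_assoc]
    _ = _ := by
        rw [key, mul_one, diagonal_mul_diagonal]
        rfl

lemma phi_one : phi hM (fun _ => 1) = 1 := by
  have key : (hM.eigenvectorUnitary : Matrix ι ι ℝ) *
      (star (hM.eigenvectorUnitary : Matrix ι ι ℝ)) = 1 :=
    Unitary.mul_star_self_of_mem (SetLike.coe_mem _)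
  unfold phi
  have : diagonal ((fun _ => (1:ℝ)) ∘ hM.eigenvalues) = 1 := by
    rw [show ((fun _ => (1:ℝ)) ∘ hM.eigenvalues) = fun _ => 1 from rfl, diagonal_one]
  rw [this, mul_one, key]

lemma phi_add (g h : ℝ → ℝ) : phi hM (fun x => g x + h x) = phi hM g + phi hM h := by
  unfold phi
  have : diagonal ((fun x => g x + h x) ∘ hM.eigenvalues) =
      diagonal (g ∘ hM.eigenvalues) + diagonal (h ∘ hM.eigenvalues) := by
    rw [diagonal_add]; rfl
  rw [this, mul_add, add_mul]

lemma phi_sub (g h : ℝ → ℝ) : phi hM (fun x => g x - h x) = phi hM g - phi hM h := by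
  unfold phi
  have : diagonal ((fun x => g x - h x) ∘ hM.eigenvalues) =
      diagonal (g ∘ hM.eigenvalues) - diagonal (h ∘ hM.eigenvalues) := by
    rw [diagonal_sub]; rfl
  rw [this, mul_sub, sub_mul]

lemma phi_smul (c : ℝ) (g : ℝ → ℝ) : phi hM (fun x => c * g x) = c • phi hM g := by
  unfold phi
  have : diagonal ((fun x => c * g x) ∘ hM.eigenvalues) =
      c • diagonal (g ∘ hM.eigenvalues) := by
    ext i j
    by_cases h : i = j <;> simp [diagonal_apply, h]
  rw [this, mul_smul_comm, smul_mul_assoc]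

lemma phi_congr {g h : ℝ → ℝ} (hgh : ∀ i, g (hM.eigenvalues i) = h (hM.eigenvalues i)) :
    phi hM g = phi hM h := by
  unfold phi
  rw [show g ∘ hM.eigenvalues = h ∘ hM.eigenvalues from funext hgh]

lemma phi_id : phi hM (fun x => x) = M := by
  unfold phi
  conv_rhs => rw [hM.spectral_theorem]
  congr 2

lemma phi_pow (k : ℕ) : phi hM (fun x => x ^ k) = M ^ k := by
  induction k with
  | zero => simpa using phi_one hM
  | succ k ih =>
      have : phi hM (fun x => x ^ (k+1)) = phi hM (fun x => x ^ k) * phi hM (fun x => x) := by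
        rw [phi_mul]
        exact phi_congr hM (fun i => (pow_succ _ _))
      rw [this, ih, phi_id, pow_succ]

lemma phi_sum (s : Finset ℕ) (g : ℕ → ℝ → ℝ) :
    phi hM (fun x => ∑ k ∈ s, g k x) = ∑ k ∈ s, phi hM (g k) := by
  classical
  induction s using Finset.induction_on with
  | empty =>
      have h0 : phi hM (fun x => (0:ℝ)) = 0 := by
        unfold phi
        have : diagonal ((fun _ => (0:ℝ)) ∘ hM.eigenvalues) = 0 := by
          rw [show ((fun _ => (0:ℝ)) ∘ hM.eigenvalues) = fun _ => 0 from rfl, diagonal_zero]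
        rw [this, mul_zero, zero_mul]
      simpa using h0
  | insert _ _ hk ih =>
      rw [Finset.sum_insert hk, ← ih, ← phi_add]
      apply phi_congr
      intro i
      rw [Finset.sum_insert hk]

end Phi

section Norms

variable {ι : Type*} [Fintype ι] [DecidableEq ι] [Nonempty ι]

lemma l2_norm_one : ‖(1 : Matrix ι ι ℝ)‖ = 1 := by
  rw [Matrix.cstar_norm_def, _root_.map_one, ContinuousLinearMap.one_def,
    ContinuousLinearMap.norm_id]

lemma l2_norm_unitary (U : Matrix ι ι ℝ) (hU : U ∈ Matrix.unitaryGroup ι ℝ) : ‖U‖ = 1 := by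
  have h1 : star U * U = 1 := Unitary.star_mul_self_of_mem hU
  have h2 : ‖Uᴴ * U‖ = ‖U‖ * ‖U‖ := Matrix.l2_opNorm_conjTranspose_mul_self U
  rw [← Matrix.star_eq_conjTranspose, h1, l2_norm_one] at h2
  rcases mul_self_eq_one_iff.mp h2.symm with h | h
  · exact h
  · have := norm_nonneg U
    linarith

lemma l2_norm_diagonal_le (d : ι → ℝ) {c : ℝ} (hc : 0 ≤ c) (hd : ∀ i, |d i| ≤ c) :
    ‖(diagonal d : Matrix ι ι ℝ)‖ ≤ c := by
  rw [Matrix.l2_opNorm_def]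
  apply ContinuousLinearMap.opNorm_le_bound _ hc
  intro x
  have hx : ∀ (y : EuclideanSpace ℝ ι), ‖y‖ = Real.sqrt (∑ i, (y i)^2) := by
    intro y
    rw [EuclideanSpace.norm_eq]
    congr 1
    congr 1
    ext i
    rw [Real.norm_eq_abs, sq_abs]
  have happly : ∀ i, ((Matrix.toEuclideanLin ≪≫ₗ LinearMap.toContinuousLinearMap)
      (diagonal d) x) i = d i * x i := by
    intro i
    simp [Matrix.toEuclideanLin, Matrix.mulVec_diagonal]
  rw [hx, hx]
  have h1 : ∑ i, (((Matrix.toEuclideanLin ≪≫ₗ LinearMap.toContinuousLinearMap)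
      (diagonal d) x) i)^2 ≤ c^2 * ∑ i, (x i)^2 := by
    rw [Finset.mul_sum]
    apply Finset.sum_le_sum
    intro i _
    rw [happly i, mul_pow]
    apply mul_le_mul_of_nonneg_right _ (sq_nonneg _)
    calc (d i)^2 = |d i|^2 := (sq_abs _).symm
      _ ≤ c^2 := pow_le_pow_left₀ (abs_nonneg _) (hd i) 2
  calc Real.sqrt (∑ i, (((Matrix.toEuclideanLin ≪≫ₗ LinearMap.toContinuousLinearMap)
      (diagonal d) x) i)^2) ≤ Real.sqrt (c^2 * ∑ i, (x i)^2) := Real.sqrt_le_sqrt h1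
    _ = c * Real.sqrt (∑ i, (x i)^2) := by
        rw [Real.sqrt_mul (sq_nonneg c), Real.sqrt_sq hc]

variable {M : Matrix ι ι ℝ}

lemma phi_norm_le (hM : M.IsHermitian) (g : ℝ → ℝ) {c : ℝ} (hc : 0 ≤ c)
    (h : ∀ i, |g (hM.eigenvalues i)| ≤ c) : ‖phi hM g‖ ≤ c := by
  unfold phi
  calc ‖(hM.eigenvectorUnitary : Matrix ι ι ℝ) * diagonal (g ∘ hM.eigenvalues) *
      (star (hM.eigenvectorUnitary : Matrix ι ι ℝ))‖
      ≤ ‖(hM.eigenvectorUnitary : Matrix ι ι ℝ) * diagonal (g ∘ hM.eigenvalues)‖ *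
        ‖(star (hM.eigenvectorUnitary : Matrix ι ι ℝ))‖ := Matrix.l2_opNorm_mul _ _
    _ ≤ ‖(hM.eigenvectorUnitary : Matrix ι ι ℝ)‖ * ‖diagonal (g ∘ hM.eigenvalues)‖ *
        ‖(star (hM.eigenvectorUnitary : Matrix ι ι ℝ))‖ := by
        apply mul_le_mul_of_nonneg_right (Matrix.l2_opNorm_mul _ _) (norm_nonneg _)
    _ ≤ 1 * c * 1 := by
        have hu1 : ‖(hM.eigenvectorUnitary : Matrix ι ι ℝ)‖ = 1 :=
          l2_norm_unitary _ (SetLike.coe_mem _)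
        have hu2 : ‖(star (hM.eigenvectorUnitary : Matrix ι ι ℝ))‖ = 1 := by
          rw [Matrix.star_eq_conjTranspose, Matrix.l2_opNorm_conjTranspose]
          exact hu1
        rw [hu1, hu2]
        simp only [one_mul, mul_one]
        exact l2_norm_diagonal_le _ hc h
    _ = c := by ring

end Norms

section Eig

variable {ι : Type*} [Fintype ι] [DecidableEq ι] {M : Matrix ι ι ℝ}

lemma star_dot_self_eq_one (hM : M.IsHermitian) (i : ι) :
    star ⇑(hM.eigenvectorBasis i) ⬝ᵥ ⇑(hM.eigenvectorBasis i) = 1 := by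
  have horm := hM.eigenvectorBasis.orthonormal.1 i
  have h := EuclideanSpace.inner_eq_star_dotProduct (𝕜 := ℝ)
    (hM.eigenvectorBasis i) (hM.eigenvectorBasis i)
  have h2 : (inner ℝ (hM.eigenvectorBasis i) (hM.eigenvectorBasis i) : ℝ) = 1 := by
    rw [real_inner_self_eq_norm_sq, horm]; norm_num
  rw [h2] at h
  simpa using h.symm

lemma eigenvalue_as_dot (hM : M.IsHermitian) (i : ι) :
    hM.eigenvalues i = ⇑(hM.eigenvectorBasis i) ⬝ᵥ (M *ᵥ ⇑(hM.eigenvectorBasis i)) := by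
  have := hM.eigenvalues_eq i
  simpa using this

lemma eig_lower_bound (hM : M.IsHermitian) (a : ℝ) (hpsd : (M - a • 1).PosSemidef) (i : ι) :
    a ≤ hM.eigenvalues i := by
  set v := ⇑(hM.eigenvectorBasis i) with hv
  have h1 := hpsd.dotProduct_mulVec_nonneg v
  have hvv : star v ⬝ᵥ v = 1 := star_dot_self_eq_one hM i
  have hsv : star v = v := by
    funext j; simp
  rw [sub_mulVec, dotProduct_sub, smul_mulVec, one_mulVec, dotProduct_smul, hvv] at h1
  have h2 := eigenvalue_as_dot hM i
  rw [hsv] at h1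
  rw [← h2] at h1
  simp only [smul_eq_mul, mul_one] at h1
  linarith

lemma eig_upper_bound (hM : M.IsHermitian) (c : ℝ)
    (h : ∀ p, ∑ q, |M p q| ≤ c) (i : ι) : hM.eigenvalues i ≤ c := by
  set v := ⇑(hM.eigenvectorBasis i) with hv
  have hvv : star v ⬝ᵥ v = 1 := star_dot_self_eq_one hM i
  have hsv : star v = v := by funext j; simp
  rw [hsv] at hvv
  have hvv' : ∑ p, (v p)^2 = 1 := by
    have : ∑ p, v p * v p = 1 := hvv
    calc ∑ p, (v p)^2 = ∑ p, v p * v p := by simp [sq]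
      _ = 1 := this
  have hsym : ∀ p q, M q p = M p q := by
    intro p q
    have := congrFun (congrFun hM q) p
    simpa [conjTranspose_apply] using this.symm
  have key : ∀ (A x y : ℝ), x * (A * y) ≤ |A| * ((x^2 + y^2)/2) := by
    intro A x y
    have h1 : 0 ≤ (|A| + A) * (x - y)^2 :=
      mul_nonneg (by linarith [neg_abs_le A]) (sq_nonneg _)
    have h2 : 0 ≤ (|A| - A) * (x + y)^2 :=
      mul_nonneg (by linarith [le_abs_self A]) (sq_nonneg _)
    nlinarith [h1, h2]
  have hA : (∑ p, ∑ q, |M p q| * ((v p)^2/2)) ≤ c/2 := by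
    have e1 : (∑ p, ∑ q, |M p q| * ((v p)^2/2)) = ∑ p, ((v p)^2/2) * ∑ q, |M p q| := by
      apply Finset.sum_congr rfl
      intro p _
      rw [Finset.mul_sum]
      apply Finset.sum_congr rfl
      intro q _
      ring
    rw [e1]
    have e2 : (∑ p, ((v p)^2/2) * ∑ q, |M p q|) ≤ ∑ p, ((v p)^2/2) * c := by
      apply Finset.sum_le_sum
      intro p _
      exact mul_le_mul_of_nonneg_left (h p) (by positivity)
    have e3 : (∑ p, ((v p)^2/2) * c) = c/2 := by
      rw [← Finset.sum_mul, ← Finset.sum_div, hvv']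
      ring
    linarith
  have hB : (∑ p, ∑ q, |M p q| * ((v q)^2/2)) ≤ c/2 := by
    rw [Finset.sum_comm]
    have e1 : (∑ q, ∑ p, |M p q| * ((v q)^2/2)) = ∑ q, ((v q)^2/2) * ∑ p, |M q p| := by
      apply Finset.sum_congr rfl
      intro q _
      rw [Finset.mul_sum]
      apply Finset.sum_congr rfl
      intro p _
      rw [hsym p q]
      ring
    rw [e1]
    have e2 : (∑ q, ((v q)^2/2) * ∑ p, |M q p|) ≤ ∑ q, ((v q)^2/2) * c := by
      apply Finset.sum_le_sum
      intro q _
      exact mul_le_mul_of_nonneg_left (h q) (by positivity)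
    have e3 : (∑ q, ((v q)^2/2) * c) = c/2 := by
      rw [← Finset.sum_mul, ← Finset.sum_div, hvv']
      ring
    linarith
  rw [eigenvalue_as_dot hM i, ← hv]
  calc v ⬝ᵥ (M *ᵥ v) = ∑ p, ∑ q, v p * (M p q * v q) := by
        simp only [dotProduct, Matrix.mulVec, Finset.mul_sum]
    _ ≤ ∑ p, ∑ q, |M p q| * (((v p)^2 + (v q)^2)/2) := by
        apply Finset.sum_le_sum
        intro p _
        apply Finset.sum_le_sum
        intro q _
        exact key _ _ _
    _ = (∑ p, ∑ q, |M p q| * ((v p)^2/2)) + (∑ p, ∑ q, |M p q| * ((v q)^2/2)) := by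
        rw [← Finset.sum_add_distrib]
        apply Finset.sum_congr rfl
        intro p _
        rw [← Finset.sum_add_distrib]
        apply Finset.sum_congr rfl
        intro q _
        ring
    _ ≤ c/2 + c/2 := add_le_add hA hB
    _ = c := by ring

/-- row sums of |entries| of a product -/
lemma rowsum_mul_le {c₁ c₂ : ℝ} (X Y : Matrix ι ι ℝ)
    (hX : ∀ p, ∑ r, |X r p| ≤ c₁) (hY : ∀ r, ∑ q, |Y r q| ≤ c₂)
    (hc₂ : 0 ≤ c₂) (p : ι) : ∑ q, |(Xᵀ * Y) p q| ≤ c₁ * c₂ := by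
  calc ∑ q, |(Xᵀ * Y) p q| ≤ ∑ q, ∑ r, |X r p| * |Y r q| := by
        apply Finset.sum_le_sum
        intro q _
        rw [mul_apply]
        calc |∑ r, Xᵀ p r * Y r q| ≤ ∑ r, |Xᵀ p r * Y r q| := Finset.abs_sum_le_sum_abs _ _
          _ = ∑ r, |X r p| * |Y r q| := by
            congr 1; ext r; rw [transpose_apply, abs_mul]
    _ = ∑ r, |X r p| * ∑ q, |Y r q| := by
        rw [Finset.sum_comm]
        congr 1; ext r; rw [Finset.mul_sum]
    _ ≤ ∑ r, |X r p| * c₂ := by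
        apply Finset.sum_le_sum
        intro r _
        exact mul_le_mul_of_nonneg_left (hY r) (abs_nonneg _)
    _ = (∑ r, |X r p|) * c₂ := by rw [Finset.sum_mul]
    _ ≤ c₁ * c₂ := mul_le_mul_of_nonneg_right (hX p) hc₂

end Eig

section Rank

variable {ι : Type*} [Fintype ι] [DecidableEq ι]

lemma rank_add_le' (A B : Matrix ι ι ℝ) : (A + B).rank ≤ A.rank + B.rank := by
  rw [Matrix.rank, Matrix.rank, Matrix.rank, mulVecLin_add]
  have hle : LinearMap.range (A.mulVecLin + B.mulVecLin) ≤
      LinearMap.range A.mulVecLin ⊔ LinearMap.range B.mulVecLin := by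
    rintro x ⟨y, rfl⟩
    exact Submodule.mem_sup.mpr ⟨A.mulVecLin y, ⟨y, rfl⟩, B.mulVecLin y, ⟨y, rfl⟩, rfl⟩
  exact le_trans (Submodule.finrank_mono hle)
    (Submodule.finrank_add_le_finrank_add_finrank _ _)

lemma rank_smul_le (c : ℝ) (A : Matrix ι ι ℝ) : (c • A).rank ≤ A.rank := by
  have : c • A = (c • (1 : Matrix ι ι ℝ)) * A := by
    rw [smul_mul_assoc, one_mul]
  rw [this]
  exact Matrix.rank_mul_le_right _ _

end Rank

section Chi

variable {n m : ℕ}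

/-- indicator of the boundary blocks -/
def chi (n m : ℕ) : (Fin n × Fin m) → ℝ := fun p =>
  if (p.1 : ℕ) = 0 ∨ (p.1 : ℕ) = n - 2 ∨ (p.1 : ℕ) = n - 1 then 1 else 0

lemma rank_diag_chi (hn : 1 ≤ n) : (diagonal (chi n m)).rank ≤ 3 * m := by
  rw [Matrix.rank_diagonal]
  have hcard : Fintype.card {p : Fin n × Fin m // chi n m p ≠ 0} ≤
      Fintype.card (Fin 3 × Fin m) := by
    apply Fintype.card_le_of_injective
      (fun s => ((⟨if (s.1.1 : ℕ) = 0 then 0 else if (s.1.1 : ℕ) = n - 2 then 1 else 2,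
        by split_ifs <;> omega⟩ : Fin 3), s.1.2))
    rintro ⟨⟨i, a⟩, hs⟩ ⟨⟨i', a'⟩, hs'⟩ hst
    simp only [Prod.mk.injEq, Fin.mk.injEq] at hst
    obtain ⟨h1, h2⟩ := hst
    have hi : (i : ℕ) = 0 ∨ (i : ℕ) = n - 2 ∨ (i : ℕ) = n - 1 := by
      by_contra hcon
      exact hs (by simp [chi, hcon])
    have hi' : (i' : ℕ) = 0 ∨ (i' : ℕ) = n - 2 ∨ (i' : ℕ) = n - 1 := by
      by_contra hcon
      exact hs' (by simp [chi, hcon])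
    have : (i : ℕ) = (i' : ℕ) := by
      split_ifs at h1 <;> omega
    apply Subtype.ext
    simp only [Prod.mk.injEq]
    exact ⟨Fin.ext this, h2⟩
  calc Fintype.card {p : Fin n × Fin m // chi n m p ≠ 0}
      ≤ Fintype.card (Fin 3 × Fin m) := hcard
    _ = 3 * m := by simp

end Chi

section RowSums

variable {n m : ℕ} {L : Matrix (Fin m) (Fin m) ℝ}

lemma sum_ite_unique {k : ℕ} (P : Fin k → Prop) [DecidablePred P]
    (huniq : ∀ j j', P j → P j' → j = j') {B : ℝ} (hB : 0 ≤ B)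
    (g : Fin k → ℝ) (hg : ∀ j, 0 ≤ g j) (hb : ∀ j, P j → g j ≤ B) :
    (∑ j, if P j then g j else 0) ≤ B := by
  rw [Finset.sum_ite, Finset.sum_const_zero, add_zero]
  have hcard : (Finset.univ.filter P).card ≤ 1 := by
    apply Finset.card_le_one.mpr
    intro a ha b hb
    exact huniq a b (Finset.mem_filter.mp ha).2 (Finset.mem_filter.mp hb).2
  calc (∑ j ∈ Finset.univ.filter P, g j) ≤ ∑ j ∈ Finset.univ.filter P, B := by
        apply Finset.sum_le_sum
        intro j hj
        exact hb j (Finset.mem_filter.mp hj).2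
    _ = (Finset.univ.filter P).card • B := by rw [Finset.sum_const]
    _ ≤ 1 • B := by
        rcases Nat.le_one_iff_eq_zero_or_eq_one.mp hcard with h | h <;> rw [h] <;> simp [hB]
    _ = B := one_smul _ _

lemma rowsum_kron (X : Matrix (Fin n) (Fin n) ℝ) (Y : Matrix (Fin m) (Fin m) ℝ)
    (p : Fin n × Fin m) :
    ∑ q, |(X ⊗ₖ Y) p q| = (∑ j, |X p.1 j|) * (∑ b, |Y p.2 b|) := by
  rw [Fintype.sum_prod_type, Finset.sum_mul_sum]
  apply Finset.sum_congr rfl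
  intro j _
  apply Finset.sum_congr rfl
  intro b _
  rw [kroneckerMap_apply, abs_mul]

/-- row sums of L -/
def sL (L : Matrix (Fin m) (Fin m) ℝ) : ℝ := ∑ a, ∑ b, |L a b|

lemma sL_nonneg : 0 ≤ sL L := by
  apply Finset.sum_nonneg
  intro a _
  apply Finset.sum_nonneg
  intro b _
  exact abs_nonneg _

lemma rowsum_L_le (a : Fin m) : (∑ b, |L a b|) ≤ sL L := by
  apply Finset.single_le_sum (f := fun a => ∑ b, |L a b|) _ (Finset.mem_univ a)
  intro a' _
  apply Finset.sum_nonneg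
  intro b _
  exact abs_nonneg _

end RowSums


variable {n : ℕ} {L : Matrix (Fin m) (Fin m) ℝ}

section Work

lemma rowsum_J_le (i : Fin n) : (∑ j, |J n i j|) ≤ 1 := by
  have h : ∀ j : Fin n, |J n i j| = if (i : ℕ) = (j : ℕ) + 1 then (1:ℝ) else 0 := by
    intro j; unfold J; split_ifs <;> simp
  rw [Finset.sum_congr rfl (fun j _ => h j)]
  apply sum_ite_unique _ _ (by norm_num) _ (fun _ => by norm_num) (fun _ _ => le_refl _)
  intro j j' hj hj'
  exact Fin.ext (by omega)

lemma rowsum_Jt_le (i : Fin n) : (∑ j, |(J n)ᵀ i j|) ≤ 1 := by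
  have h : ∀ j : Fin n, |(J n)ᵀ i j| = if (j : ℕ) = (i : ℕ) + 1 then (1:ℝ) else 0 := by
    intro j; rw [transpose_apply]; unfold J; split_ifs <;> simp
  rw [Finset.sum_congr rfl (fun j _ => h j)]
  apply sum_ite_unique _ _ (by norm_num) _ (fun _ => by norm_num) (fun _ _ => le_refl _)
  intro j j' hj hj'
  exact Fin.ext (by omega)

lemma rowsum_one_le (i : Fin n) : (∑ j, |(1 : Matrix (Fin n) (Fin n) ℝ) i j|) ≤ 1 := by
  have h : ∀ j : Fin n, |(1 : Matrix (Fin n) (Fin n) ℝ) i j| = if i = j then (1:ℝ) else 0 := by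
    intro j; rw [one_apply]; split_ifs <;> simp
  rw [Finset.sum_congr rfl (fun j _ => h j)]
  apply sum_ite_unique _ _ (by norm_num) _ (fun _ => by norm_num) (fun _ _ => le_refl _)
  intro j j' hj hj'
  rw [← hj, ← hj']

lemma rowsum_oneJJ_le (i : Fin n) : (∑ j, |(1 + J n * J n) i j|) ≤ 2 := by
  have h : ∀ j : Fin n, |(1 + J n * J n) i j| ≤
      (if i = j then (1:ℝ) else 0) + (if (i : ℕ) = (j : ℕ) + 2 then (1:ℝ) else 0) := by
    intro j
    rw [Matrix.add_apply, J_mul_J, of_apply, one_apply]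
    split_ifs <;> first | (exfalso; omega) | norm_num
  calc (∑ j, |(1 + J n * J n) i j|)
      ≤ ∑ j, ((if i = j then (1:ℝ) else 0) + (if (i : ℕ) = (j : ℕ) + 2 then (1:ℝ) else 0)) :=
        Finset.sum_le_sum (fun j _ => h j)
    _ = (∑ j : Fin n, (if i = j then (1:ℝ) else 0)) + ∑ j : Fin n, (if (i : ℕ) = (j : ℕ) + 2 then (1:ℝ) else 0) :=
        Finset.sum_add_distrib
    _ ≤ 1 + 1 := by
        apply add_le_add
        · apply sum_ite_unique _ _ (by norm_num) _ (fun _ => by norm_num) (fun _ _ => le_refl _)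
          intro j j' hj hj'
          rw [← hj, ← hj']
        · apply sum_ite_unique _ _ (by norm_num) _ (fun _ => by norm_num) (fun _ _ => le_refl _)
          intro j j' hj hj'
          exact Fin.ext (by omega)
    _ = 2 := by norm_num

lemma rowsum_oneJtJt_le (i : Fin n) : (∑ j, |(1 + (J n)ᵀ * (J n)ᵀ) i j|) ≤ 2 := by
  have hJJt : (J n)ᵀ * (J n)ᵀ = (J n * J n)ᵀ := by rw [transpose_mul]
  have h : ∀ j : Fin n, |(1 + (J n)ᵀ * (J n)ᵀ) i j| ≤
      (if i = j then (1:ℝ) else 0) + (if (j : ℕ) = (i : ℕ) + 2 then (1:ℝ) else 0) := by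
    intro j
    rw [Matrix.add_apply, hJJt, transpose_apply, J_mul_J, of_apply, one_apply]
    split_ifs <;> first | (exfalso; omega) | norm_num
  calc (∑ j, |(1 + (J n)ᵀ * (J n)ᵀ) i j|)
      ≤ ∑ j, ((if i = j then (1:ℝ) else 0) + (if (j : ℕ) = (i : ℕ) + 2 then (1:ℝ) else 0)) :=
        Finset.sum_le_sum (fun j _ => h j)
    _ = (∑ j : Fin n, (if i = j then (1:ℝ) else 0)) + ∑ j : Fin n, (if (j : ℕ) = (i : ℕ) + 2 then (1:ℝ) else 0) :=
        Finset.sum_add_distrib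
    _ ≤ 1 + 1 := by
        apply add_le_add
        · apply sum_ite_unique _ _ (by norm_num) _ (fun _ => by norm_num) (fun _ _ => le_refl _)
          intro j j' hj hj'
          rw [← hj, ← hj']
        · apply sum_ite_unique _ _ (by norm_num) _ (fun _ => by norm_num) (fun _ _ => le_refl _)
          intro j j' hj hj'
          exact Fin.ext (by omega)
    _ = 2 := by norm_num

lemma rowsum_JplusJt_le (i : Fin n) : (∑ j, |(J n + (J n)ᵀ) i j|) ≤ 2 := by
  calc (∑ j, |(J n + (J n)ᵀ) i j|) ≤ ∑ j, (|J n i j| + |(J n)ᵀ i j|) := by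
        apply Finset.sum_le_sum
        intro j _
        rw [Matrix.add_apply]
        exact abs_add_le _ _
    _ = (∑ j, |J n i j|) + ∑ j, |(J n)ᵀ i j| := Finset.sum_add_distrib
    _ ≤ 1 + 1 := add_le_add (rowsum_J_le i) (rowsum_Jt_le i)
    _ = 2 := by norm_num

lemma rowsum_add_le {ι : Type*} [Fintype ι] (X Y : Matrix ι ι ℝ) (p : ι) {cx cy : ℝ}
    (hx : (∑ q, |X p q|) ≤ cx) (hy : (∑ q, |Y p q|) ≤ cy) :
    (∑ q, |(X + Y) p q|) ≤ cx + cy := by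
  calc (∑ q, |(X + Y) p q|) ≤ ∑ q, (|X p q| + |Y p q|) := by
        apply Finset.sum_le_sum
        intro q _
        rw [Matrix.add_apply]
        exact abs_add_le _ _
    _ = (∑ q, |X p q|) + ∑ q, |Y p q| := Finset.sum_add_distrib
    _ ≤ cx + cy := add_le_add hx hy

lemma rowsum_sub_le {ι : Type*} [Fintype ι] (X Y : Matrix ι ι ℝ) (p : ι) {cx cy : ℝ}
    (hx : (∑ q, |X p q|) ≤ cx) (hy : (∑ q, |Y p q|) ≤ cy) :
    (∑ q, |(X - Y) p q|) ≤ cx + cy := by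
  calc (∑ q, |(X - Y) p q|) ≤ ∑ q, (|X p q| + |Y p q|) := by
        apply Finset.sum_le_sum
        intro q _
        rw [Matrix.sub_apply]
        exact abs_sub _ _
    _ = (∑ q, |X p q|) + ∑ q, |Y p q| := Finset.sum_add_distrib
    _ ≤ cx + cy := add_le_add hx hy

lemma rowsum_smul_eq {ι : Type*} [Fintype ι] (c : ℝ) (X : Matrix ι ι ℝ) (p : ι) :
    (∑ q, |(c • X) p q|) = |c| * ∑ q, |X p q| := by
  rw [Finset.mul_sum]
  apply Finset.sum_congr rfl
  intro q _
  rw [Matrix.smul_apply, smul_eq_mul, abs_mul]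

lemma rowsum_kron_le (X : Matrix (Fin n) (Fin n) ℝ) (Y : Matrix (Fin m) (Fin m) ℝ)
    (p : Fin n × Fin m) {cx cy : ℝ} (hcy : 0 ≤ cy)
    (hx : (∑ j, |X p.1 j|) ≤ cx) (hy : (∑ b, |Y p.2 b|) ≤ cy) :
    (∑ q, |(X ⊗ₖ Y) p q|) ≤ cx * cy := by
  rw [rowsum_kron]
  exact mul_le_mul hx hy (Finset.sum_nonneg (fun b _ => abs_nonneg _))
    (le_trans (Finset.sum_nonneg (fun j _ => abs_nonneg _)) hx)

lemma rowsum_T_le (p : Fin n × Fin m) : (∑ q, |Tmat m n L p q|) ≤ 2 * sL L + 2 := by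
  rw [Tmat_eq]
  apply rowsum_add_le
  · exact rowsum_kron_le _ _ _ sL_nonneg (rowsum_oneJJ_le p.1) (rowsum_L_le p.2)
  · have h2 : (∑ q, |((-2:ℝ) • (J n ⊗ₖ (1 : Matrix (Fin m) (Fin m) ℝ))) p q|)
        = |(-2:ℝ)| * ∑ q, |(J n ⊗ₖ (1 : Matrix (Fin m) (Fin m) ℝ)) p q| := rowsum_smul_eq _ _ _
    rw [h2]
    have h3 : (∑ q, |(J n ⊗ₖ (1 : Matrix (Fin m) (Fin m) ℝ)) p q|) ≤ 1 * 1 :=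
      rowsum_kron_le _ _ _ (by norm_num) (rowsum_J_le p.1) (rowsum_one_le p.2)
    calc |(-2:ℝ)| * (∑ q, |(J n ⊗ₖ (1 : Matrix (Fin m) (Fin m) ℝ)) p q|) ≤ 2 * (1 * 1) := by
          rw [show |(-2:ℝ)| = 2 by norm_num]
          exact mul_le_mul_of_nonneg_left h3 (by norm_num)
      _ = 2 := by norm_num

lemma colsum_T_le (hsym : Lᵀ = L) (p : Fin n × Fin m) :
    (∑ r, |Tmat m n L r p|) ≤ 2 * sL L + 2 := by
  have h : ∀ r, |Tmat m n L r p| = |(Tmat m n L)ᵀ p r| := by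
    intro r; rw [transpose_apply]
  rw [Finset.sum_congr rfl (fun r _ => h r), Tmat_transpose_eq hsym]
  apply rowsum_add_le
  · exact rowsum_kron_le _ _ _ sL_nonneg (rowsum_oneJtJt_le p.1) (rowsum_L_le p.2)
  · have h2 : (∑ q, |((-2:ℝ) • ((J n)ᵀ ⊗ₖ (1 : Matrix (Fin m) (Fin m) ℝ))) p q|)
        = |(-2:ℝ)| * ∑ q, |((J n)ᵀ ⊗ₖ (1 : Matrix (Fin m) (Fin m) ℝ)) p q| := rowsum_smul_eq _ _ _
    rw [h2]
    have h3 : (∑ q, |((J n)ᵀ ⊗ₖ (1 : Matrix (Fin m) (Fin m) ℝ)) p q|) ≤ 1 * 1 :=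
      rowsum_kron_le _ _ _ (by norm_num) (rowsum_Jt_le p.1) (rowsum_one_le p.2)
    calc |(-2:ℝ)| * (∑ q, |((J n)ᵀ ⊗ₖ (1 : Matrix (Fin m) (Fin m) ℝ)) p q|) ≤ 2 * (1 * 1) := by
          rw [show |(-2:ℝ)| = 2 by norm_num]
          exact mul_le_mul_of_nonneg_left h3 (by norm_num)
      _ = 2 := by norm_num

lemma rowsum_G_le (hsym : Lᵀ = L) (p : Fin n × Fin m) :
    (∑ q, |Gmat m n L p q|) ≤ 2 * sL L + 2 := by
  rw [Gmat_eq hsym]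
  have hfinal : (2:ℝ) + 2 * sL L = 2 * sL L + 2 := by ring
  rw [← hfinal]
  apply rowsum_sub_le
  · have h2 : (∑ q, |((2:ℝ) • ((1 : Matrix (Fin n) (Fin n) ℝ) ⊗ₖ
        (1 : Matrix (Fin m) (Fin m) ℝ))) p q|)
        = |(2:ℝ)| * ∑ q, |((1 : Matrix (Fin n) (Fin n) ℝ) ⊗ₖ
          (1 : Matrix (Fin m) (Fin m) ℝ)) p q| := rowsum_smul_eq _ _ _
    rw [h2]
    have h3 : (∑ q, |((1 : Matrix (Fin n) (Fin n) ℝ) ⊗ₖ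
        (1 : Matrix (Fin m) (Fin m) ℝ)) p q|) ≤ 1 * 1 :=
      rowsum_kron_le _ _ _ (by norm_num) (rowsum_one_le p.1) (rowsum_one_le p.2)
    calc |(2:ℝ)| * (∑ q, |((1 : Matrix (Fin n) (Fin n) ℝ) ⊗ₖ
          (1 : Matrix (Fin m) (Fin m) ℝ)) p q|) ≤ 2 * (1 * 1) := by
          rw [show |(2:ℝ)| = 2 by norm_num]
          exact mul_le_mul_of_nonneg_left h3 (by norm_num)
      _ = 2 := by norm_num
  · exact rowsum_kron_le _ _ _ sL_nonneg (rowsum_JplusJt_le p.1) (rowsum_L_le p.2)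

/-- Row support of the difference: rows outside the boundary blocks vanish. -/
lemma F_row_support (hsym : Lᵀ = L) (p q : Fin n × Fin m) (hp : chi n m p = 0) :
    ((Tmat m n L)ᵀ * Tmat m n L - (Gmat m n L)ᵀ * Gmat m n L) p q = 0 := by
  have hp' : ¬((p.1 : ℕ) = 0 ∨ (p.1 : ℕ) = n - 2 ∨ (p.1 : ℕ) = n - 1) := by
    intro hcon
    rw [chi, if_pos hcon] at hp
    norm_num at hp
  push_neg at hp'
  obtain ⟨h0, h2, h1⟩ := hp'
  have hpn : (p.1 : ℕ) < n := p.1.isLt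
  rw [key_formula hsym]
  have e1 : P0 n p.1 q.1 = 0 := by
    rw [P0, diagonal_apply]
    split_ifs <;> first | (exfalso; omega) | rfl
  have e5 : Pl n p.1 q.1 = 0 := by
    rw [Pl, diagonal_apply]
    split_ifs <;> first | (exfalso; omega) | rfl
  have e4 : (Pl n * J n) p.1 q.1 = 0 := by
    rw [Pl, diagonal_mul, if_neg h1, zero_mul]
  have e3 : ((J n)ᵀ * Pl n) p.1 q.1 = 0 := by
    rw [Pl, mul_diagonal, transpose_apply, J]
    split_ifs <;> first | (exfalso; omega) | ring
  have e2 : ((J n)ᵀ * (Pl n * J n)) p.1 q.1 = 0 := by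
    rw [mul_apply]
    apply Finset.sum_eq_zero
    intro k _
    rw [transpose_apply, J, Pl, diagonal_mul]
    by_cases hk : (k : ℕ) = (p.1 : ℕ) + 1
    · have : ¬((k : ℕ) = n - 1) := by omega
      rw [if_neg this, zero_mul, mul_zero]
    · rw [if_neg hk, zero_mul]
  simp only [Matrix.add_apply, Matrix.sub_apply, kroneckerMap_apply, e1, e2, e3, e4, e5, zero_mul]
  ring

end Work


end Stmt11

open Stmt11

/- Small-norm plus low-rank splitting of
`(T_nᵀT_n + α²I)^{−1/2} − (G_nᵀG_n + α²I)^{−1/2}`. -/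
theorem stmt_11 (m : ℕ) (hm : 1 ≤ m) (α : ℝ) (hα : 0 < α)
    (L : Matrix (Fin m) (Fin m) ℝ) (hL : L.PosDef) :
    ∀ ε : ℝ, 0 < ε → ∃ K : ℕ, 0 < K ∧ ∀ n : ℕ, 4 * K * m < n →
      ∃ E R : Matrix (Fin n × Fin m) (Fin n × Fin m) ℝ,
        (matSqrt ((Tmat m n L)ᵀ * Tmat m n L + (α ^ 2) • 1))⁻¹ -
          (matSqrt ((Gmat m n L)ᵀ * Gmat m n L + (α ^ 2) • 1))⁻¹ = E + R ∧
        ‖E‖ ≤ ε ∧ R.rank ≤ 4 * K * m := by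
  intro ε hε
  -- symmetry of L
  have hsym : Lᵀ = L := by
    rw [← Matrix.conjTranspose_eq_transpose_of_trivial]
    exact hL.1
  -- the uniform spectral interval
  set c : ℝ := 2 * sL L + 2 with hc
  have hc0 : 0 < c := by
    have := sL_nonneg (L := L)
    simp only [hc]
    linarith
  set Λ : ℝ := c * c + α ^ 2 with hΛ
  have hαΛ : α ^ 2 ≤ Λ := by
    simp only [hΛ]
    nlinarith
  -- polynomial approximation of x ↦ (√x)⁻¹ on [α², Λ]
  set f : ℝ → ℝ := fun x => (Real.sqrt x)⁻¹ with hf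
  have hcont : ContinuousOn f (Set.Icc (α ^ 2) Λ) := by
    apply ContinuousOn.inv₀ (Real.continuous_sqrt.continuousOn)
    intro x hx
    have hx1 : 0 < x := lt_of_lt_of_le (by positivity) hx.1
    exact ne_of_gt (Real.sqrt_pos.mpr hx1)
  obtain ⟨P, hP⟩ := exists_polynomial_near_of_continuousOn (α ^ 2) Λ f hcont (ε / 2)
    (by linarith)
  set d : ℕ := P.natDegree with hd
  refine ⟨d * d + 1, Nat.succ_pos _, ?_⟩
  intro n hn
  have hm5 : 5 ≤ n := by nlinarith [hm, Nat.succ_pos (d * d)]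
  have hn0 : 0 < n := by omega
  have hm0 : 0 < m := hm
  haveI : Nonempty (Fin n × Fin m) := ⟨(⟨0, hn0⟩, ⟨0, hm0⟩)⟩
  -- the two matrices
  set A : Matrix (Fin n × Fin m) (Fin n × Fin m) ℝ :=
    (Tmat m n L)ᵀ * Tmat m n L + (α ^ 2) • 1 with hA
  set B : Matrix (Fin n × Fin m) (Fin n × Fin m) ℝ :=
    (Gmat m n L)ᵀ * Gmat m n L + (α ^ 2) • 1 with hB
  -- positive semidefiniteness
  have hsmul_psd : ((α ^ 2) • (1 : Matrix (Fin n × Fin m) (Fin n × Fin m) ℝ)).PosSemidef := by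
    have h1 : (α ^ 2) • (1 : Matrix (Fin n × Fin m) (Fin n × Fin m) ℝ) =
        diagonal (fun _ => α ^ 2) := by
      ext p q
      by_cases h : p = q <;> simp [diagonal_apply, h]
    rw [h1]
    exact posSemidef_diagonal_iff.mpr (fun _ => by positivity)
  have hTpsd : ((Tmat m n L)ᵀ * Tmat m n L).PosSemidef := by
    rw [← Matrix.conjTranspose_eq_transpose_of_trivial]
    exact posSemidef_conjTranspose_mul_self _
  have hGpsd : ((Gmat m n L)ᵀ * Gmat m n L).PosSemidef := by
    rw [← Matrix.conjTranspose_eq_transpose_of_trivial]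
    exact posSemidef_conjTranspose_mul_self _
  have hApsd : A.PosSemidef := hTpsd.add hsmul_psd
  have hBpsd : B.PosSemidef := hGpsd.add hsmul_psd
  have hAH : A.IsHermitian := hApsd.1
  have hBH : B.IsHermitian := hBpsd.1
  -- eigenvalue bounds
  have hAeig_lo : ∀ i, α ^ 2 ≤ hAH.eigenvalues i := by
    apply eig_lower_bound
    have : A - (α ^ 2) • 1 = (Tmat m n L)ᵀ * Tmat m n L := by
      rw [hA]; abel
    rw [this]
    exact hTpsd
  have hBeig_lo : ∀ i, α ^ 2 ≤ hBH.eigenvalues i := by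
    apply eig_lower_bound
    have : B - (α ^ 2) • 1 = (Gmat m n L)ᵀ * Gmat m n L := by
      rw [hB]; abel
    rw [this]
    exact hGpsd
  have hrow_one : ∀ p : Fin n × Fin m,
      (∑ q, |((α ^ 2) • (1 : Matrix (Fin n × Fin m) (Fin n × Fin m) ℝ)) p q|) ≤ α ^ 2 := by
    intro p
    rw [rowsum_smul_eq]
    have h1 : ∀ q, |(1 : Matrix (Fin n × Fin m) (Fin n × Fin m) ℝ) p q| =
        if p = q then (1:ℝ) else 0 := by
      intro q; rw [one_apply]; split_ifs <;> simp
    rw [Finset.sum_congr rfl (fun q _ => h1 q), Finset.sum_ite_eq]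
    simp [abs_of_nonneg (sq_nonneg α)]
  have hArow : ∀ p, (∑ q, |A p q|) ≤ Λ := by
    intro p
    rw [hA, hΛ]
    apply rowsum_add_le
    · exact rowsum_mul_le _ _ (fun r => colsum_T_le hsym r) (fun r => rowsum_T_le r)
        (by linarith) p
    · exact hrow_one p
  have hBrow : ∀ p, (∑ q, |B p q|) ≤ Λ := by
    intro p
    rw [hB, hΛ]
    apply rowsum_add_le
    · have hcol : ∀ r, (∑ s, |Gmat m n L s r|) ≤ c := by
        intro r
        have h : ∀ s, |Gmat m n L s r| = |(Gmat m n L)ᵀ r s| := by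
          intro s; rw [transpose_apply]
        rw [Finset.sum_congr rfl (fun s _ => h s), Gmat_transpose_eq hsym]
        exact rowsum_G_le hsym r
      exact rowsum_mul_le _ _ hcol (fun r => rowsum_G_le hsym r) (by linarith) p
    · exact hrow_one p
  have hAeig_hi : ∀ i, hAH.eigenvalues i ≤ Λ := eig_upper_bound hAH Λ hArow
  have hBeig_hi : ∀ i, hBH.eigenvalues i ≤ Λ := eig_upper_bound hBH Λ hBrow
  -- the inverse square roots as spectral functions
  have hsqrtA : matSqrt A = phi hAH Real.sqrt := by
    unfold matSqrt
    rw [dif_pos hApsd]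
    rfl
  have hsqrtB : matSqrt B = phi hBH Real.sqrt := by
    unfold matSqrt
    rw [dif_pos hBpsd]
    rfl
  have hinvA : (matSqrt A)⁻¹ = phi hAH f := by
    rw [hsqrtA]
    apply Matrix.inv_eq_left_inv
    rw [phi_mul]
    have : phi hAH (fun x => f x * Real.sqrt x) = phi hAH (fun _ => 1) := by
      apply phi_congr
      intro i
      have h1 : 0 < Real.sqrt (hAH.eigenvalues i) :=
        Real.sqrt_pos.mpr (lt_of_lt_of_le (by positivity) (hAeig_lo i))
      simp only [hf]
      exact inv_mul_cancel₀ (ne_of_gt h1)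
    rw [this, phi_one]
  have hinvB : (matSqrt B)⁻¹ = phi hBH f := by
    rw [hsqrtB]
    apply Matrix.inv_eq_left_inv
    rw [phi_mul]
    have : phi hBH (fun x => f x * Real.sqrt x) = phi hBH (fun _ => 1) := by
      apply phi_congr
      intro i
      have h1 : 0 < Real.sqrt (hBH.eigenvalues i) :=
        Real.sqrt_pos.mpr (lt_of_lt_of_le (by positivity) (hBeig_lo i))
      simp only [hf]
      exact inv_mul_cancel₀ (ne_of_gt h1)
    rw [this, phi_one]
  -- the polynomial as function and as matrix polynomial
  set qf : ℝ → ℝ := fun x => ∑ k ∈ Finset.range (d + 1), P.coeff k * x ^ k with hqf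
  have hqeval : ∀ x, qf x = P.eval x := by
    intro x
    rw [hqf]
    exact (Polynomial.eval_eq_sum_range (p := P) x).symm
  have hphiq : ∀ {M : Matrix (Fin n × Fin m) (Fin n × Fin m) ℝ} (hM : M.IsHermitian),
      phi hM qf = ∑ k ∈ Finset.range (d + 1), P.coeff k • M ^ k := by
    intro M hM
    rw [hqf, phi_sum]
    apply Finset.sum_congr rfl
    intro k _
    rw [phi_smul, phi_pow]
  set QA : Matrix (Fin n × Fin m) (Fin n × Fin m) ℝ :=
    ∑ k ∈ Finset.range (d + 1), P.coeff k • A ^ k with hQA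
  set QB : Matrix (Fin n × Fin m) (Fin n × Fin m) ℝ :=
    ∑ k ∈ Finset.range (d + 1), P.coeff k • B ^ k with hQB
  refine ⟨(phi hAH f - QA) - (phi hBH f - QB), QA - QB, ?_, ?_, ?_⟩
  · rw [hinvA, hinvB]
    abel
  · -- norm bound
    have hbound : ∀ {M : Matrix (Fin n × Fin m) (Fin n × Fin m) ℝ} (hM : M.IsHermitian),
        (∀ i, α ^ 2 ≤ hM.eigenvalues i) → (∀ i, hM.eigenvalues i ≤ Λ) →
        ‖phi hM f - (∑ k ∈ Finset.range (d + 1), P.coeff k • M ^ k)‖ ≤ ε / 2 := by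
      intro M hM hlo hhi
      rw [← hphiq hM, ← phi_sub]
      apply phi_norm_le hM _ (c := ε / 2) (by linarith)
      intro i
      have hmem : hM.eigenvalues i ∈ Set.Icc (α ^ 2) Λ := ⟨hlo i, hhi i⟩
      have := hP _ hmem
      rw [hqeval]
      rw [abs_sub_comm] at this
      linarith [this]
    calc ‖(phi hAH f - QA) - (phi hBH f - QB)‖
        ≤ ‖phi hAH f - QA‖ + ‖phi hBH f - QB‖ := norm_sub_le _ _
      _ ≤ ε / 2 + ε / 2 := add_le_add (hbound hAH hAeig_lo hAeig_hi)
          (hbound hBH hBeig_lo hBeig_hi)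
      _ = ε := by ring
  · -- rank bound
    have hABF : A - B = (Tmat m n L)ᵀ * Tmat m n L - (Gmat m n L)ᵀ * Gmat m n L := by
      rw [hA, hB]; abel
    have hDF : diagonal (chi n m) * (A - B) = A - B := by
      ext p q
      rw [diagonal_mul]
      by_cases hp : chi n m p = 0
      · rw [hp, zero_mul, hABF]
        exact (F_row_support hsym p q hp).symm
      · have : chi n m p = 1 := by
          unfold chi at hp ⊢
          split_ifs at hp ⊢ with h
          · rfl
          · exact absurd rfl hp
        rw [this, one_mul]
    have hrankD : (diagonal (chi n m)).rank ≤ 3 * m := rank_diag_chi (by omega)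
    have hpow : ∀ k : ℕ, (A ^ k - B ^ k).rank ≤ k * (3 * m) := by
      intro k
      induction k with
      | zero => simp
      | succ k ih =>
          have hsplit : A ^ (k + 1) - B ^ (k + 1) =
              (A ^ k - B ^ k) * A + B ^ k * (A - B) := by
            rw [pow_succ, pow_succ]
            noncomm_ring
          rw [hsplit]
          calc ((A ^ k - B ^ k) * A + B ^ k * (A - B)).rank
              ≤ ((A ^ k - B ^ k) * A).rank + (B ^ k * (A - B)).rank := rank_add_le' _ _
            _ ≤ k * (3 * m) + 3 * m := by
                apply add_le_add
                · exact le_trans (Matrix.rank_mul_le_left _ _) ih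
                · rw [← hDF]
                  exact le_trans (le_trans (Matrix.rank_mul_le_right _ _)
                    (Matrix.rank_mul_le_left _ _)) hrankD
            _ = (k + 1) * (3 * m) := by ring
    have hsum_rank : ∀ (s : Finset ℕ) (M : ℕ → Matrix (Fin n × Fin m) (Fin n × Fin m) ℝ),
        (∑ k ∈ s, M k).rank ≤ ∑ k ∈ s, (M k).rank := by
      intro s M
      classical
      induction s using Finset.induction_on with
      | empty => simp
      | insert _ _ hk ih =>
          rw [Finset.sum_insert hk, Finset.sum_insert hk]
          exact le_trans (rank_add_le' _ _) (add_le_add (le_refl _) ih)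
    have hQ : QA - QB = ∑ k ∈ Finset.range (d + 1), P.coeff k • (A ^ k - B ^ k) := by
      rw [hQA, hQB, ← Finset.sum_sub_distrib]
      apply Finset.sum_congr rfl
      intro k _
      rw [smul_sub]
    rw [hQ]
    calc (∑ k ∈ Finset.range (d + 1), P.coeff k • (A ^ k - B ^ k)).rank
        ≤ ∑ k ∈ Finset.range (d + 1), (P.coeff k • (A ^ k - B ^ k)).rank :=
          hsum_rank _ _
      _ ≤ ∑ k ∈ Finset.range (d + 1), k * (3 * m) := by
          apply Finset.sum_le_sum
          intro k _
          exact le_trans (rank_smul_le _ _) (hpow k)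
      _ ≤ 4 * (d * d + 1) * m := by
          rw [← Finset.sum_mul]
          have h2 : (∑ k ∈ Finset.range (d + 1), k) * 2 = (d + 1) * d :=
            Finset.sum_range_id_mul_two (d + 1)
          have hdd : d ≤ d * d + 1 := by
            rcases Nat.eq_zero_or_pos d with h | h
            · simp [h]
            · calc d ≤ d * d := Nat.le_mul_of_pos_left d h
                _ ≤ d * d + 1 := Nat.le_succ _
          have h3 : 3 * ((d + 1) * d) ≤ 8 * (d * d + 1) := by nlinarith [hdd]
          have h4 : (∑ k ∈ Finset.range (d + 1), k) * (3 * m) * 2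
              = (3 * ((d + 1) * d)) * m := by
            calc (∑ k ∈ Finset.range (d + 1), k) * (3 * m) * 2
                = ((∑ k ∈ Finset.range (d + 1), k) * 2) * (3 * m) := by ring
              _ = ((d + 1) * d) * (3 * m) := by rw [h2]
              _ = (3 * ((d + 1) * d)) * m := by ring
          have h5 : (3 * ((d + 1) * d)) * m ≤ (8 * (d * d + 1)) * m :=
            Nat.mul_le_mul_right m h3
          have h6 : (8 * (d * d + 1)) * m = (4 * (d * d + 1) * m) * 2 := by ring
          apply Nat.le_of_mul_le_mul_right _ (show 0 < 2 by norm_num)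
          rw [h4, ← h6]
          exact h5
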